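/- arXiv:1911.00620 — 11 statements merged into one kernel-verified Lean document; each statement's English description precedes it below -/
import Mathlib

section
/- Let G = (ℤ/2ℤ)^(3k+1) for k ≥ 1, and for x ∈ G let |x| denote the number of coordinates equal to 1. Define R = {x ∈ G : 1 ≤ |x| ≤ 2k} and B = {x ∈ G : 2k+1 ≤ |x| ≤ 3k+1}. Then the sumset B + B equals R ∪ {0}. -/
/-- Hamming weight of a vector in (ℤ/2ℤ)^m. -/
def hwt {m : ℕ} (x : Fin m → ZMod 2) : ℕ :=
  (Finset.univ.filter (fun i => x i = 1)).card

open Finset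

lemma zmod2_eq_zero_of_ne_one {a : ZMod 2} (h : a ≠ 1) : a = 0 := by
  revert h; revert a; decide

lemma hwt_eq_zero {m : ℕ} {z : Fin m → ZMod 2} (h : hwt z = 0) : z = 0 := by
  funext i
  have := Finset.card_eq_zero.mp h
  have hi : i ∉ Finset.univ.filter (fun i => z i = 1) := by
    rw [this]; exact Finset.notMem_empty i
  simp only [Finset.mem_filter, Finset.mem_univ, true_and] at hi
  exact zmod2_eq_zero_of_ne_one hi

theorem stmt_0 (k : ℕ) (hk : 1 ≤ k)
    (R : Set (Fin (3 * k + 1) → ZMod 2))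
    (B : Set (Fin (3 * k + 1) → ZMod 2))
    (hR : R = {x | 1 ≤ hwt x ∧ hwt x ≤ 2 * k})
    (hB : B = {x | 2 * k + 1 ≤ hwt x ∧ hwt x ≤ 3 * k + 1}) :
    {z | ∃ x ∈ B, ∃ y ∈ B, x + y = z} = R ∪ {0} := by
  subst hR hB
  ext z
  simp only [Set.mem_setOf_eq, Set.mem_union, Set.mem_singleton_iff]
  constructor
  · rintro ⟨x, ⟨hx1, hx2⟩, y, ⟨hy1, hy2⟩, rfl⟩
    by_cases hz : x + y = 0
    · right; exact hz
    left
    refine ⟨?_, ?_⟩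
    · rcases Nat.eq_zero_or_pos (hwt (x + y)) with h | h
      · exact absurd (hwt_eq_zero h) hz
      · exact h
    · -- support of x+y ⊆ {x ≠ 1} ∪ {y ≠ 1}
      have hsub : Finset.univ.filter (fun i => (x + y) i = 1) ⊆
          Finset.univ.filter (fun i => ¬ x i = 1) ∪ Finset.univ.filter (fun i => ¬ y i = 1) := by
        intro i hi
        simp only [Finset.mem_filter, Finset.mem_univ, true_and, Finset.mem_union,
          Pi.add_apply] at hi ⊢
        by_contra hc
        push_neg at hc
        rw [hc.1, hc.2] at hi
        exact absurd hi (by decide)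
      have hx3 : (Finset.univ.filter (fun i => ¬ x i = 1)).card ≤ k := by
        have := Finset.card_filter_add_card_filter_not
          (s := (Finset.univ : Finset (Fin (3 * k + 1)))) (p := fun i => x i = 1)
        simp only [Finset.card_univ, Fintype.card_fin] at this
        unfold hwt at hx1; omega
      have hy3 : (Finset.univ.filter (fun i => ¬ y i = 1)).card ≤ k := by
        have := Finset.card_filter_add_card_filter_not
          (s := (Finset.univ : Finset (Fin (3 * k + 1)))) (p := fun i => y i = 1)
        simp only [Finset.card_univ, Fintype.card_fin] at this
        unfold hwt at hy1; omega
      calc hwt (x + y) ≤ _ := Finset.card_le_card hsub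
        _ ≤ _ + _ := Finset.card_union_le _ _
        _ ≤ 2 * k := by omega
  · rintro (⟨hz1, hz2⟩ | rfl)
    · -- constructive splitting
      set S : Finset (Fin (3 * k + 1)) := Finset.univ.filter (fun i => z i = 1) with hS
      have hScard : S.card = hwt z := rfl
      set c : ℕ := hwt z - min (hwt z) k with hc
      have hcle : c ≤ S.card := by rw [hScard]; omega
      obtain ⟨S1, hS1sub, hS1card⟩ := Finset.exists_subset_card_eq (s := S) hcle
      set y : Fin (3 * k + 1) → ZMod 2 := fun i => if i ∈ S1 then 0 else 1 with hy
      have hyy : y + y = 0 := by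
        funext i
        simp only [Pi.add_apply, Pi.zero_apply, hy]
        split <;> decide
      have hy_supp : Finset.univ.filter (fun i => y i = 1) = S1ᶜ := by
        ext i
        simp only [Finset.mem_filter, Finset.mem_univ, true_and, Finset.mem_compl, hy]
        split <;> simp_all <;> decide
      have hx_supp : Finset.univ.filter (fun i => (z + y) i = 1) = (S \ S1)ᶜ := by
        ext i
        simp only [Finset.mem_filter, Finset.mem_univ, true_and, Finset.mem_compl,
          Finset.mem_sdiff, Pi.add_apply, hy]
        by_cases h1 : i ∈ S1
        · have hz1 : z i = 1 := by
            have := hS1sub h1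
            simp only [hS, Finset.mem_filter] at this
            exact this.2
          simp [h1, hz1]
        · by_cases h2 : i ∈ S
          · have hz1 : z i = 1 := by
              simp only [hS, Finset.mem_filter] at h2; exact h2.2
            simp [h1, h2, hz1]
          · have hz0 : z i = 0 := by
              simp only [hS, Finset.mem_filter, Finset.mem_univ, true_and] at h2
              exact zmod2_eq_zero_of_ne_one h2
            simp [h1, h2, hz0]
      have hSd : (S \ S1).card = hwt z - c := by
        rw [Finset.card_sdiff_of_subset hS1sub, hS1card, hScard]
      have hwy : hwt y = 3 * k + 1 - c := by
        unfold hwt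
        rw [hy_supp, Finset.card_compl, Fintype.card_fin, hS1card]
      have hwx : hwt (z + y) = 3 * k + 1 - (hwt z - c) := by
        unfold hwt
        rw [hx_supp, Finset.card_compl, Fintype.card_fin, hSd]; rfl
      refine ⟨z + y, ⟨?_, ?_⟩, y, ⟨?_, ?_⟩, ?_⟩
      · rw [hwx]; omega
      · rw [hwx]; omega
      · rw [hwy]; omega
      · rw [hwy]; omega
      · rw [add_assoc, hyy, add_zero]
    · -- zero case
      refine ⟨(fun _ => 1), ⟨?_, ?_⟩, (fun _ => 1), ⟨?_, ?_⟩, ?_⟩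
      · unfold hwt; simp; omega
      · unfold hwt; simp
      · unfold hwt; simp; omega
      · unfold hwt; simp
      · funext i; show (1 : ZMod 2) + 1 = 0; decide
end

section
/- Let G = (ℤ/2ℤ)^(3k+1) for k ≥ 1, with R = {x : 1 ≤ |x| ≤ 2k} and B = {x : 2k+1 ≤ |x| ≤ 3k+1}. Then R + R = G and R + B = G \ {0}. -/
open scoped symmDiff


namespace HwtAux

variable {m : ℕ}

def ind (S : Finset (Fin m)) : Fin m → ZMod 2 := fun i => if i ∈ S then 1 else 0

lemma hwt_ind (S : Finset (Fin m)) : hwt (ind S) = S.card := by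
  unfold hwt ind
  congr 1
  ext i
  by_cases h : i ∈ S <;> simp [h]

lemma ind_add (S T : Finset (Fin m)) : ind S + ind T = ind (S ∆ T) := by
  funext i
  simp only [ind, Pi.add_apply, Finset.mem_symmDiff]
  by_cases hS : i ∈ S <;> by_cases hT : i ∈ T <;> simp [hS, hT] <;> decide

def supp (x : Fin m → ZMod 2) : Finset (Fin m) :=
  Finset.univ.filter (fun i => x i = 1)

lemma hwt_eq_card_supp (x : Fin m → ZMod 2) : hwt x = (supp x).card := rfl

lemma ind_supp (x : Fin m → ZMod 2) : ind (supp x) = x := by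
  funext i
  simp only [ind, supp, Finset.mem_filter, Finset.mem_univ, true_and]
  rcases (by decide : ∀ a : ZMod 2, a = 0 ∨ a = 1) (x i) with h | h <;> simp [h]

lemma supp_eq_empty_iff (x : Fin m → ZMod 2) : supp x = ∅ ↔ x = 0 := by
  constructor
  · intro h
    have hx := ind_supp x
    rw [h] at hx
    rw [← hx]
    funext i; simp [ind]
  · intro h
    subst h
    ext i
    simp only [supp, Finset.mem_filter, Finset.mem_univ, true_and,
      Finset.notMem_empty, iff_false, Pi.zero_apply]
    decide

lemma exists_not_mem {Z : Finset (Fin m)} (h : Z.card < m) : ∃ j, j ∉ Z := by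
  have : (Zᶜ).Nonempty := by
    rw [← Finset.card_pos, Finset.card_compl, Fintype.card_fin]
    omega
  obtain ⟨j, hj⟩ := this
  exact ⟨j, Finset.mem_compl.mp hj⟩

end HwtAux

open HwtAux in
theorem stmt_1 (k : ℕ) (hk : 1 ≤ k)
    (R : Set (Fin (3 * k + 1) → ZMod 2))
    (B : Set (Fin (3 * k + 1) → ZMod 2))
    (hR : R = {x | 1 ≤ hwt x ∧ hwt x ≤ 2 * k})
    (hB : B = {x | 2 * k + 1 ≤ hwt x ∧ hwt x ≤ 3 * k + 1}) :
    {z | ∃ x ∈ R, ∃ y ∈ R, x + y = z} = Set.univ ∧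
    {z | ∃ x ∈ R, ∃ y ∈ B, x + y = z} = Set.univ \ {0} := by
  subst hR hB
  constructor
  · -- R + R = univ
    ext z
    simp only [Set.mem_setOf_eq, Set.mem_univ, iff_true]
    set Z := supp z with hZdef
    have hzZ : ind Z = z := ind_supp z
    have hZle : Z.card ≤ 3 * k + 1 := by
      have := Finset.card_le_univ Z
      simpa using this
    by_cases hw : Z.card ≤ 1
    · -- small case: S = insert j Z, T = {j} with j ∉ Z
      obtain ⟨j, hjZ⟩ := exists_not_mem (Z := Z) (by omega)
      refine ⟨ind (insert j Z), ?_, ind {j}, ?_, ?_⟩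
      · constructor <;> rw [hwt_ind] <;>
          rw [Finset.card_insert_of_notMem hjZ] <;> omega
      · constructor <;> rw [hwt_ind, Finset.card_singleton] <;> omega
      · rw [ind_add, ← hzZ]
        have : symmDiff (insert j Z) {j} = Z := by
          ext a
          simp only [Finset.mem_symmDiff, Finset.mem_insert, Finset.mem_singleton]
          by_cases ha : a = j
          · subst ha; simp [hjZ]
          · simp [ha]
        rw [this]
    · -- Z.card ≥ 2 : split Z into two halves
      obtain ⟨T, hTZ, hTcard⟩ := Finset.exists_subset_card_eq
        (s := Z) (n := Z.card / 2) (Nat.div_le_self _ _)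
      have hScard : (Z \ T).card = Z.card - Z.card / 2 := by
        rw [Finset.card_sdiff_of_subset hTZ, hTcard]
      refine ⟨ind (Z \ T), ?_, ind T, ?_, ?_⟩
      · constructor <;> rw [hwt_ind, hScard] <;> omega
      · constructor <;> rw [hwt_ind, hTcard] <;> omega
      · rw [ind_add, sdiff_symmDiff_eq_sup, sup_eq_left.mpr hTZ, hzZ]
  · -- R + B = univ \ {0}
    ext z
    simp only [Set.mem_setOf_eq, Set.mem_diff, Set.mem_univ, Set.mem_singleton_iff,
      true_and]
    constructor
    · rintro ⟨x, hx, y, hy, hxy⟩ hz0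
      subst hz0
      have hxy' : x = y := by
        funext i
        have h0 : x i + y i = 0 := congrFun hxy i
        rcases (by decide : ∀ a : ZMod 2, a = 0 ∨ a = 1) (x i) with h | h <;>
          rcases (by decide : ∀ a : ZMod 2, a = 0 ∨ a = 1) (y i) with h' | h' <;>
          rw [h, h'] at h0 ⊢ <;> first | rfl | (exfalso; revert h0; decide)
      rw [hxy'] at hx
      omega
    · intro hz0
      set Z := supp z with hZdef
      have hzZ : ind Z = z := ind_supp z
      have hZle : Z.card ≤ 3 * k + 1 := by
        have := Finset.card_le_univ Z
        simpa using this
      have hZne : Z ≠ ∅ := fun h => hz0 ((supp_eq_empty_iff z).mp h)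
      have hZpos : 1 ≤ Z.card := Finset.card_pos.mpr (Finset.nonempty_iff_ne_empty.mpr hZne)
      rcases lt_trichotomy Z.card (2 * k + 1) with hw | hw | hw
      · -- w ≤ 2k: take Y ⊇ Z of card 2k+1, X = Y \ Z
        obtain ⟨Y, hZY, hYcard⟩ := Finset.exists_superset_card_eq (s := Z) (n := 2 * k + 1)
          (by omega) (by simp; omega)
        have hXcard : (Y \ Z).card = 2 * k + 1 - Z.card := by
          rw [Finset.card_sdiff_of_subset hZY, hYcard]
        refine ⟨ind (Y \ Z), ?_, ind Y, ?_, ?_⟩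
        · constructor <;> rw [hwt_ind, hXcard] <;> omega
        · constructor <;> rw [hwt_ind, hYcard] <;> omega
        · rw [ind_add, symmDiff_comm, symmDiff_of_ge sdiff_le, sdiff_sdiff_right_self,
            inf_eq_right.mpr hZY, hzZ]
      · -- w = 2k+1: X = {i, j} with i ∈ Z, j ∉ Z; Y = X ∆ Z
        obtain ⟨i, hiZ⟩ := Finset.card_pos.mp (by omega : 0 < Z.card)
        obtain ⟨j, hjZ⟩ := exists_not_mem (Z := Z) (by omega)
        have hij : i ≠ j := fun h => hjZ (h ▸ hiZ)
        have hXcard : ({i, j} : Finset (Fin (3 * k + 1))).card = 2 := by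
          rw [Finset.card_insert_of_notMem (by simpa using hij), Finset.card_singleton]
        have hYeq : ({i, j} : Finset (Fin (3 * k + 1))) ∆ Z = insert j (Z.erase i) := by
          ext a
          simp only [Finset.mem_symmDiff, Finset.mem_insert, Finset.mem_singleton,
            Finset.mem_erase]
          by_cases hai : a = i
          · subst hai; simp [hiZ, hij]
          · by_cases haj : a = j
            · subst haj; simp [hjZ]
            · simp [hai, haj]
        have hYcard : (({i, j} : Finset (Fin (3 * k + 1))) ∆ Z).card = 2 * k + 1 := by
          rw [hYeq, Finset.card_insert_of_notMem (by simp [hjZ]),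
            Finset.card_erase_of_mem hiZ]
          omega
        refine ⟨ind {i, j}, ?_, ind ({i, j} ∆ Z), ?_, ?_⟩
        · constructor <;> rw [hwt_ind, hXcard] <;> omega
        · constructor <;> rw [hwt_ind, hYcard] <;> omega
        · rw [ind_add, symmDiff_symmDiff_cancel_left, hzZ]
      · -- w ≥ 2k+2: X ⊆ Z with card w - (2k+1), Y = Z \ X
        obtain ⟨X, hXZ, hXcard⟩ := Finset.exists_subset_card_eq
          (s := Z) (n := Z.card - (2 * k + 1)) (by omega)
        have hYcard : (Z \ X).card = 2 * k + 1 := by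
          rw [Finset.card_sdiff_of_subset hXZ, hXcard]
          omega
        refine ⟨ind X, ?_, ind (Z \ X), ?_, ?_⟩
        · constructor <;> rw [hwt_ind, hXcard] <;> omega
        · constructor <;> rw [hwt_ind, hYcard] <;> omega
        · rw [ind_add, symmDiff_comm, sdiff_symmDiff_eq_sup, sup_eq_left.mpr hXZ, hzZ]
end

section
/- Let G = (ℤ/2ℤ)^(3k+1) for k ≥ 1, R = {x : 1 ≤ |x| ≤ 2k}, B = {x : 2k+1 ≤ |x| ≤ 3k+1}. For every z ∈ R, the number of ordered pairs (x, y) with x, y ∈ B and x + y = z is at least 2^k. -/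
lemma zmod2_cases : ∀ a : ZMod 2, a = 0 ∨ a = 1 := by decide

lemma zmod2_add_self : ∀ a : ZMod 2, a + a = 0 := by decide

lemma hwt_ind {m : ℕ} (A : Finset (Fin m)) :
    hwt (fun i => if i ∈ A then (1:ZMod 2) else 0) = A.card := by
  unfold hwt
  congr 1
  ext i
  simp only [Finset.mem_filter, Finset.mem_univ, true_and]
  split_ifs with h <;> simp [h]

lemma sum_choose_ge (k : ℕ) : ∀ j, j ≤ k →
    2^k ≤ ∑ i ∈ Finset.range (k+1-j), (k+j).choose (j+i) := by
  intro j
  induction j with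
  | zero => intro _; simpa using (Nat.sum_range_choose k).ge
  | succ j ih =>
    intro hj
    have hj' : j ≤ k := by omega
    have key : ∑ i ∈ Finset.range (k+1-(j+1)), (k+(j+1)).choose ((j+1)+i)
        = (∑ i ∈ Finset.range (k-j), (k+j).choose (j+i))
          + ∑ i ∈ Finset.range (k-j), (k+j).choose ((j+i)+1) := by
      rw [show k+1-(j+1) = k-j from by omega, ← Finset.sum_add_distrib]
      refine Finset.sum_congr rfl (fun i _ => ?_)
      rw [show k+(j+1) = (k+j)+1 from by ring, show (j+1)+i = (j+i)+1 from by ring,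
        Nat.choose_succ_succ]
    have h3 : (k+j).choose (j+(k-j)) ≤ ∑ i ∈ Finset.range (k-j), (k+j).choose ((j+i)+1) := by
      have hmem : k-j-1 ∈ Finset.range (k-j) := by simp; omega
      have := Finset.single_le_sum (f := fun i => (k+j).choose ((j+i)+1))
        (fun i _ => Nat.zero_le _) hmem
      simpa [show (j+(k-j-1))+1 = j+(k-j) from by omega] using this
    calc 2^k ≤ ∑ i ∈ Finset.range (k+1-j), (k+j).choose (j+i) := ih hj'
    _ = (∑ i ∈ Finset.range (k-j), (k+j).choose (j+i)) + (k+j).choose (j+(k-j)) := by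
        rw [show k+1-j = (k-j)+1 from by omega, Finset.sum_range_succ]
    _ ≤ (∑ i ∈ Finset.range (k-j), (k+j).choose (j+i))
          + ∑ i ∈ Finset.range (k-j), (k+j).choose ((j+i)+1) := Nat.add_le_add_left h3 _
    _ = _ := key.symm

theorem stmt_2 (k : ℕ) (hk : 1 ≤ k)
    (R : Set (Fin (3 * k + 1) → ZMod 2))
    (B : Set (Fin (3 * k + 1) → ZMod 2))
    (hR : R = {x | 1 ≤ hwt x ∧ hwt x ≤ 2 * k})
    (hB : B = {x | 2 * k + 1 ≤ hwt x ∧ hwt x ≤ 3 * k + 1})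
    (z : Fin (3 * k + 1) → ZMod 2) (hz : z ∈ R) :
    2 ^ k ≤ {p : (Fin (3 * k + 1) → ZMod 2) × (Fin (3 * k + 1) → ZMod 2) |
      p.1 ∈ B ∧ p.2 ∈ B ∧ p.1 + p.2 = z}.ncard := by
  subst hR hB
  obtain ⟨hz1, hz2⟩ := hz
  classical
  set w := hwt z with hw
  set S : Finset (Fin (3*k+1)) := Finset.univ.filter (fun i => z i = 1) with hS
  have hSmem : ∀ i, i ∈ S ↔ z i = 1 := by intro i; simp [hS]
  have hScard : S.card = w := rfl
  have huniv : (Finset.univ : Finset (Fin (3*k+1))).card = 3*k+1 := by simp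
  have hwle : w ≤ 3*k+1 := by
    rw [← hScard]
    have := S.card_le_univ
    simpa using this
  have hScompl : Sᶜ.card = 3*k+1 - w := by
    rw [Finset.card_compl, hScard]; simp
  obtain ⟨D₀, hD₀S, hD₀card⟩ := Finset.exists_subset_card_eq (s := Sᶜ) (n := k - w) (by rw [hScompl]; omega)
  set ind : Finset (Fin (3*k+1)) → (Fin (3*k+1) → ZMod 2) :=
    fun A i => if i ∈ A then 1 else 0 with hind
  set Φ : Finset (Fin (3*k+1)) × Finset (Fin (3*k+1)) → (Fin (3*k+1) → ZMod 2) :=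
    fun q => ind (q.1 ∪ (Sᶜ \ q.2)) with hΦ
  set F := (S.powerset ×ˢ D₀.powerset).filter
    (fun q => q.1.card + q.2.card ≤ k ∧ w + q.2.card ≤ q.1.card + k) with hF
  have hmemF : ∀ q ∈ F, q.1 ⊆ S ∧ q.2 ⊆ D₀ ∧ q.1.card + q.2.card ≤ k
      ∧ w + q.2.card ≤ q.1.card + k := by
    intro q hq
    simp only [hF, Finset.mem_filter, Finset.mem_product, Finset.mem_powerset] at hq
    exact ⟨hq.1.1, hq.1.2, hq.2.1, hq.2.2⟩
  -- pointwise description of Φ q + z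
  have hplus : ∀ q : Finset (Fin (3*k+1)) × Finset (Fin (3*k+1)), q.1 ⊆ S →
      Φ q + z = ind ((S \ q.1) ∪ (Sᶜ \ q.2)) := by
    intro q hT
    funext i
    show (if i ∈ q.1 ∪ (Sᶜ \ q.2) then (1:ZMod 2) else 0) + z i
      = if i ∈ (S \ q.1) ∪ (Sᶜ \ q.2) then 1 else 0
    by_cases hiS : i ∈ S
    · have hz1 : z i = 1 := (hSmem i).mp hiS
      have hc : i ∉ Sᶜ := by simp [hiS]
      by_cases hiT : i ∈ q.1 <;>
        simp [Finset.mem_union, Finset.mem_sdiff, hiS, hiT, hz1, hc, Finset.mem_compl] <;> decide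
    · have hz0 : z i = 0 := by
        rcases zmod2_cases (z i) with h | h
        · exact h
        · exact absurd ((hSmem i).mpr h) hiS
      have hiT : i ∉ q.1 := fun h => hiS (hT h)
      simp [Finset.mem_union, Finset.mem_sdiff, Finset.mem_compl, hiS, hiT, hz0]
  -- weight formulas
  have hdisj : ∀ (A : Finset (Fin (3*k+1))) (D : Finset (Fin (3*k+1))), A ⊆ S →
      Disjoint A (Sᶜ \ D) := by
    intro A D hA
    rw [Finset.disjoint_left]
    intro a ha hb
    rw [Finset.mem_sdiff, Finset.mem_compl] at hb
    exact hb.1 (hA ha)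
  have hwtcard : ∀ (A D : Finset (Fin (3*k+1))), A ⊆ S → D ⊆ Sᶜ →
      hwt (ind (A ∪ (Sᶜ \ D))) = A.card + (Sᶜ.card - D.card) := by
    intro A D hA hD
    have h1 : hwt (ind (A ∪ (Sᶜ \ D))) = (A ∪ (Sᶜ \ D)).card := hwt_ind _
    rw [h1, Finset.card_union_of_disjoint (hdisj A D hA), Finset.card_sdiff_of_subset hD]
  -- membership of images in B
  have hmemB : ∀ q ∈ F, (2*k+1 ≤ hwt (Φ q) ∧ hwt (Φ q) ≤ 3*k+1)
      ∧ (2*k+1 ≤ hwt (Φ q + z) ∧ hwt (Φ q + z) ≤ 3*k+1) := by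
    intro q hq
    obtain ⟨hT, hD, hc1, hc2⟩ := hmemF q hq
    have hDc : q.2 ⊆ Sᶜ := hD.trans hD₀S
    have ht : q.1.card ≤ w := hScard ▸ Finset.card_le_card hT
    have hd : q.2.card ≤ k - w := hD₀card ▸ Finset.card_le_card hD
    have hdc : q.2.card ≤ 3*k+1-w := hScompl ▸ Finset.card_le_card hDc
    have e1 : hwt (Φ q) = q.1.card + (Sᶜ.card - q.2.card) := hwtcard q.1 q.2 hT hDc
    have e2 : hwt (Φ q + z) = (S \ q.1).card + (Sᶜ.card - q.2.card) := by
      rw [hplus q hT]; exact hwtcard (S \ q.1) q.2 (Finset.sdiff_subset) hDc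
    have e3 : (S \ q.1).card = w - q.1.card := by rw [Finset.card_sdiff_of_subset hT, hScard]
    rw [e1, e2, e3, hScompl]
    omega
  -- recovery of q from Φ q
  have hrec : ∀ q ∈ F, q.1 = S.filter (fun i => Φ q i = 1)
      ∧ q.2 = D₀.filter (fun i => Φ q i = 0) := by
    intro q hq
    obtain ⟨hT, hD, -, -⟩ := hmemF q hq
    constructor
    · ext i
      simp only [Finset.mem_filter]
      constructor
      · intro hi
        refine ⟨hT hi, ?_⟩
        show (if i ∈ q.1 ∪ (Sᶜ \ q.2) then (1:ZMod 2) else 0) = 1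
        rw [if_pos (Finset.mem_union_left _ hi)]
      · rintro ⟨hiS, hi1⟩
        change (if i ∈ q.1 ∪ (Sᶜ \ q.2) then (1:ZMod 2) else 0) = 1 at hi1
        by_contra hiT
        have : i ∉ q.1 ∪ (Sᶜ \ q.2) := by
          simp only [Finset.mem_union, Finset.mem_sdiff, Finset.mem_compl]
          push_neg
          exact ⟨hiT, fun h => absurd hiS h⟩
        rw [if_neg this] at hi1
        exact absurd hi1 (by decide)
    · ext i
      simp only [Finset.mem_filter]
      constructor
      · intro hi
        refine ⟨hD hi, ?_⟩
        show (if i ∈ q.1 ∪ (Sᶜ \ q.2) then (1:ZMod 2) else 0) = 0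
        have hiSc : i ∈ Sᶜ := hD₀S (hD hi)
        have : i ∉ q.1 ∪ (Sᶜ \ q.2) := by
          simp only [Finset.mem_union, Finset.mem_sdiff]
          push_neg
          refine ⟨fun h => ?_, fun _ => hi⟩
          exact (Finset.mem_compl.mp hiSc) (hT h)
        rw [if_neg this]
      · rintro ⟨hiD₀, hi0⟩
        change (if i ∈ q.1 ∪ (Sᶜ \ q.2) then (1:ZMod 2) else 0) = 0 at hi0
        by_contra hiD
        have hiSc : i ∈ Sᶜ := hD₀S hiD₀
        have : i ∈ q.1 ∪ (Sᶜ \ q.2) :=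
          Finset.mem_union_right _ (Finset.mem_sdiff.mpr ⟨hiSc, hiD⟩)
        rw [if_pos this] at hi0
        exact absurd hi0 (by decide)
  -- cardinality of F
  have hFcard : 2^k ≤ F.card := by
    rcases le_or_gt w k with hwk | hwk
    · have hFeq : F = S.powerset ×ˢ D₀.powerset := by
        rw [hF]
        apply Finset.filter_true_of_mem
        intro q hq
        rw [Finset.mem_product, Finset.mem_powerset, Finset.mem_powerset] at hq
        have ht : q.1.card ≤ w := hScard ▸ Finset.card_le_card hq.1
        have hd : q.2.card ≤ k - w := hD₀card ▸ Finset.card_le_card hq.2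
        omega
      rw [hFeq, Finset.card_product, Finset.card_powerset, Finset.card_powerset,
        hScard, hD₀card, ← pow_add]
      apply le_of_eq
      congr 1
      omega
    · have hD₀empty : D₀ = ∅ := Finset.card_eq_zero.mp (by rw [hD₀card]; omega)
      set F' := (Finset.Icc (w-k) k).biUnion (fun t => S.powersetCard t) with hF'
      have hinjTE : Function.Injective
          (fun T : Finset (Fin (3*k+1)) => (T, (∅ : Finset (Fin (3*k+1))))) := by
        intro a b h
        exact (Prod.ext_iff.mp h).1
      have hsub : F'.image (fun T => (T, (∅ : Finset (Fin (3*k+1))))) ⊆ F := by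
        intro q hq
        simp only [Finset.mem_image] at hq
        obtain ⟨T, hT, rfl⟩ := hq
        simp only [hF', Finset.mem_biUnion, Finset.mem_Icc, Finset.mem_powersetCard] at hT
        obtain ⟨t, ⟨h1, h2⟩, hTS, hTc⟩ := hT
        simp only [hF, Finset.mem_filter, Finset.mem_product, Finset.mem_powerset]
        refine ⟨⟨hTS, by simp [hD₀empty]⟩, ?_, ?_⟩ <;> simp [hTc] <;> omega
      have hle1 : F'.card ≤ F.card := by
        rw [← Finset.card_image_of_injective F' hinjTE]
        exact Finset.card_le_card hsub
      have hcard' : F'.card = ∑ t ∈ Finset.Icc (w-k) k, w.choose t := by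
        rw [hF', Finset.card_biUnion]
        · exact Finset.sum_congr rfl
            (fun t _ => by rw [Finset.card_powersetCard, hScard])
        · intro a ha b hb hab
          rw [Function.onFun, Finset.disjoint_left]
          intro T hTa hTb
          rw [Finset.mem_powersetCard] at hTa hTb
          exact hab (hTa.2.symm ▸ hTb.2)
      have hsum : ∑ t ∈ Finset.Icc (w-k) k, w.choose t
          = ∑ i ∈ Finset.range (k+1-(w-k)), w.choose ((w-k)+i) := by
        rw [← Finset.Ico_add_one_right_eq_Icc, Finset.sum_Ico_eq_sum_range]
      have hge := sum_choose_ge k (w-k) (by omega)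
      rw [show k+(w-k) = w from by omega] at hge
      omega
  -- assemble
  set Ψ : Finset (Fin (3*k+1)) × Finset (Fin (3*k+1))
      → (Fin (3*k+1) → ZMod 2) × (Fin (3*k+1) → ZMod 2) :=
    fun q => (Φ q, Φ q + z) with hΨ
  have hinjΨ : Set.InjOn Ψ F := by
    intro a ha b hb hab
    have hphi : Φ a = Φ b := (Prod.ext_iff.mp hab).1
    obtain ⟨ha1, ha2⟩ := hrec a ha
    obtain ⟨hb1, hb2⟩ := hrec b hb
    have : a.1 = b.1 := by rw [ha1, hb1, hphi]
    have h2 : a.2 = b.2 := by rw [ha2, hb2, hphi]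
    exact Prod.ext this h2
  have himg : ↑(F.image Ψ) ⊆ {p : (Fin (3 * k + 1) → ZMod 2) × (Fin (3 * k + 1) → ZMod 2) |
      p.1 ∈ {x | 2 * k + 1 ≤ hwt x ∧ hwt x ≤ 3 * k + 1}
      ∧ p.2 ∈ {x | 2 * k + 1 ≤ hwt x ∧ hwt x ≤ 3 * k + 1} ∧ p.1 + p.2 = z} := by
    intro p hp
    simp only [Finset.coe_image, Set.mem_image, Finset.mem_coe] at hp
    obtain ⟨q, hq, rfl⟩ := hp
    obtain ⟨hB1, hB2⟩ := hmemB q hq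
    refine ⟨hB1, hB2, ?_⟩
    show Φ q + (Φ q + z) = z
    funext i
    show Φ q i + (Φ q i + z i) = z i
    rw [← add_assoc, zmod2_add_self, zero_add]
  calc (2:ℕ)^k ≤ F.card := hFcard
  _ = (F.image Ψ).card := (Finset.card_image_of_injOn hinjΨ).symm
  _ = (↑(F.image Ψ) : Set _).ncard := (Set.ncard_coe_finset _).symm
  _ ≤ _ := Set.ncard_le_ncard himg (Set.toFinite _)
end

section
/- Let G = (ℤ/2ℤ)^(3k+1) for k ≥ 1, R = {x : 1 ≤ |x| ≤ 2k}, B = {x : 2k+1 ≤ |x| ≤ 3k+1}. For every z ∈ B, the number of ordered pairs (x, y) with x ∈ B, y ∈ R and x + y = z is at least 2^k. -/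
theorem stmt_3 (k : ℕ) (hk : 1 ≤ k)
    (R : Set (Fin (3 * k + 1) → ZMod 2))
    (B : Set (Fin (3 * k + 1) → ZMod 2))
    (hR : R = {x | 1 ≤ hwt x ∧ hwt x ≤ 2 * k})
    (hB : B = {x | 2 * k + 1 ≤ hwt x ∧ hwt x ≤ 3 * k + 1})
    (z : Fin (3 * k + 1) → ZMod 2) (hz : z ∈ B) :
    2 ^ k ≤ {p : (Fin (3 * k + 1) → ZMod 2) × (Fin (3 * k + 1) → ZMod 2) |
      p.1 ∈ B ∧ p.2 ∈ R ∧ p.1 + p.2 = z}.ncard := by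
  subst hR hB
  obtain ⟨hz1, hz2⟩ := hz
  have hzm2 : ∀ a : ZMod 2, a = 0 ∨ a = 1 := by decide
  set Z : Finset (Fin (3*k+1)) := Finset.univ.filter (fun i => z i = 1) with hZdef
  have hwz : hwt z = Z.card := rfl
  have hZ1 : 2*k+1 ≤ Z.card := hz1
  have hZle : Z.card ≤ 3*k+1 := by
    simpa using Finset.card_le_univ Z
  have hZc : Zᶜ.card = 3*k+1 - Z.card := by
    simp [Finset.card_compl]
  obtain ⟨T, hTZ, hTcard⟩ := Finset.exists_subset_card_eq (s := Z) (n := Z.card - 2*k) (by omega)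
  set U : Finset (Fin (3*k+1)) := T ∪ Zᶜ with hUdef
  have hdisj : Disjoint T Zᶜ := by
    exact Finset.disjoint_left.mpr (fun i hi hc => (Finset.mem_compl.mp hc) (hTZ hi))
  have hUcard : U.card = k+1 := by
    rw [hUdef, Finset.card_union_of_disjoint hdisj, hTcard, hZc]
    omega
  -- the indicator map
  set e : Finset (Fin (3*k+1)) → (Fin (3*k+1) → ZMod 2) :=
    fun S i => if i ∈ S then 1 else 0 with hedef
  have he_hwt : ∀ S, hwt (e S) = S.card := by
    intro S
    have : Finset.univ.filter (fun i => e S i = 1) = S := by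
      ext i; by_cases h : i ∈ S <;> simp [hedef, h]
    rw [hwt, this]
  have he_inj : ∀ S1 S2, e S1 = e S2 → S1 = S2 := by
    intro S1 S2 h
    ext i
    have h' := congrFun h i
    simp only [hedef] at h'
    by_cases h1 : i ∈ S1 <;> by_cases h2 : i ∈ S2 <;>
      simp only [h1, h2, if_true, if_false] at h' <;> simp [h1, h2]
    · exact absurd h' one_ne_zero
    · exact absurd h'.symm one_ne_zero
  have he_supp : ∀ S, Finset.univ.filter (fun i => (z + e S) i = 1) = (Z \ S) ∪ (S \ Z) := by
    intro S
    ext i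
    rcases hzm2 (z i) with h1 | h1 <;> by_cases h2 : i ∈ S <;>
      simp [hedef, hZdef, h1, h2]
  have hD : ∀ S ⊆ U, S ≠ ∅ → S ≠ T →
      (z + e S, e S) ∈ {p : (Fin (3 * k + 1) → ZMod 2) × (Fin (3 * k + 1) → ZMod 2) |
      p.1 ∈ {x | 2 * k + 1 ≤ hwt x ∧ hwt x ≤ 3 * k + 1} ∧
      p.2 ∈ {x | 1 ≤ hwt x ∧ hwt x ≤ 2 * k} ∧ p.1 + p.2 = z} := by
    intro S hSU hSne hSneT
    have hScard : 1 ≤ S.card := Finset.card_pos.mpr (Finset.nonempty_of_ne_empty hSne)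
    have hSUcard : S.card ≤ k+1 := hUcard ▸ Finset.card_le_card hSU
    -- Z ∩ S ⊆ T
    have hZS_T : Z ∩ S ⊆ T := by
      intro i hi
      rw [Finset.mem_inter] at hi
      rcases Finset.mem_union.mp (hSU hi.2) with h | h
      · exact h
      · exact absurd hi.1 (Finset.mem_compl.mp h)
    have hkey : (Z ∩ S).card ≤ (Z.card - (2*k+1)) + (S \ Z).card := by
      by_cases hTS : T ⊆ S
      · -- S \ Z nonempty
        have : ∃ i ∈ S, i ∉ Z := by
          by_contra hcon
          push_neg at hcon
          apply hSneT
          apply Finset.Subset.antisymm _ hTS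
          intro i hi
          rcases Finset.mem_union.mp (hSU hi) with h | h
          · exact h
          · exact absurd (hcon i hi) (Finset.mem_compl.mp h)
        obtain ⟨i, hiS, hiZ⟩ := this
        have h1 : 1 ≤ (S \ Z).card := Finset.card_pos.mpr ⟨i, Finset.mem_sdiff.mpr ⟨hiS, hiZ⟩⟩
        have h2 : (Z ∩ S).card ≤ T.card := Finset.card_le_card hZS_T
        omega
      · have : Z ∩ S ⊂ T := by
          refine Finset.ssubset_iff_of_subset hZS_T |>.mpr ?_
          obtain ⟨i, hiT, hiS⟩ := Finset.not_subset.mp hTS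
          exact ⟨i, hiT, fun h => hiS (Finset.mem_inter.mp h).2⟩
        have h2 : (Z ∩ S).card < T.card := Finset.card_lt_card this
        omega
    have hxsupp := he_supp S
    have hxhwt : hwt (z + e S) = (Z \ S).card + (S \ Z).card := by
      rw [hwt, hxsupp, Finset.card_union_of_disjoint (disjoint_sdiff_sdiff)]
    have hZsd : (Z ∩ S).card + (Z \ S).card = Z.card := Finset.card_inter_add_card_sdiff Z S
    have hSZle : (S \ Z).card ≤ S.card := Finset.card_le_card (Finset.sdiff_subset)
    refine ⟨⟨?_, ?_⟩, ⟨?_, ?_⟩, ?_⟩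
    · rw [hxhwt]; omega
    · rw [hxhwt]
      have := Finset.card_le_univ ((Z \ S) ∪ (S \ Z))
      rw [Finset.card_union_of_disjoint (disjoint_sdiff_sdiff)] at this
      simpa using this
    · rw [he_hwt]; omega
    · rw [he_hwt]; omega
    · funext i
      show z i + e S i + e S i = z i
      rw [add_assoc, CharTwo.add_self_eq_zero, add_zero]
  -- the domain finset
  set D : Finset (Finset (Fin (3*k+1))) := (U.powerset.erase ∅).erase T with hDdef
  have hTne : T ≠ ∅ := by
    intro h
    rw [h, Finset.card_empty] at hTcard
    omega
  have hDcard : D.card = 2^(k+1) - 2 := by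
    rw [hDdef, Finset.card_erase_of_mem, Finset.card_erase_of_mem]
    · rw [Finset.card_powerset, hUcard, Nat.sub_sub]
    · simp
    · exact Finset.mem_erase.mpr ⟨hTne, Finset.mem_powerset.mpr Finset.subset_union_left⟩
  set f : Finset (Fin (3*k+1)) → ((Fin (3*k+1) → ZMod 2) × (Fin (3*k+1) → ZMod 2)) :=
    fun S => (z + e S, e S) with hfdef
  have himg : ↑(D.image f) ⊆ {p : (Fin (3 * k + 1) → ZMod 2) × (Fin (3 * k + 1) → ZMod 2) |
      p.1 ∈ {x | 2 * k + 1 ≤ hwt x ∧ hwt x ≤ 3 * k + 1} ∧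
      p.2 ∈ {x | 1 ≤ hwt x ∧ hwt x ≤ 2 * k} ∧ p.1 + p.2 = z} := by
    intro p hp
    simp only [Finset.coe_image, Set.mem_image, Finset.mem_coe] at hp
    obtain ⟨S, hS, rfl⟩ := hp
    rw [hDdef] at hS
    obtain ⟨hSneT, hS'⟩ := Finset.mem_erase.mp hS
    obtain ⟨hSne, hSU⟩ := Finset.mem_erase.mp hS'
    exact hD S (Finset.mem_powerset.mp hSU) hSne hSneT
  have hinjD : Set.InjOn f ↑D := by
    intro S1 _ S2 _ h
    exact he_inj S1 S2 (congrArg Prod.snd h)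
  have hcard_img : (D.image f).card = D.card := Finset.card_image_of_injOn hinjD
  have h1 := Set.ncard_le_ncard himg (Set.toFinite _)
  rw [Set.ncard_coe_finset, hcard_img, hDcard] at h1
  have h2 : 2 ≤ 2^k := by
    calc 2 = 2^1 := rfl
    _ ≤ 2^k := Nat.pow_le_pow_right (by norm_num) hk
  have h3 : 2^(k+1) = 2 * 2^k := by ring
  rw [h3] at h1
  generalize 2^k = m at h1 h2 ⊢
  omega
end

section
/- Let G = (ℤ/2ℤ)^(3k+1) for k ≥ 1, R = {x : 1 ≤ |x| ≤ 2k}. For every z ∈ R, the number of ordered pairs (x, y) with x, y ∈ R and x + y = z is at least 2^k. -/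
def chi {m : ℕ} (S : Finset (Fin m)) : Fin m → ZMod 2 :=
  fun i => if i ∈ S then 1 else 0

lemma chi_eq_one {m : ℕ} (S : Finset (Fin m)) (a : Fin m) : chi S a = 1 ↔ a ∈ S := by
  by_cases ha : a ∈ S <;> simp [chi, ha]

lemma hwt_chi {m : ℕ} (S : Finset (Fin m)) : hwt (chi S) = S.card := by
  unfold hwt; congr 1; ext a; simp [chi_eq_one]

lemma chi_add {m : ℕ} (S T : Finset (Fin m)) : chi S + chi T = chi (symmDiff S T) := by
  funext i
  by_cases hs : i ∈ S <;> by_cases ht : i ∈ T <;>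
    simp [chi, hs, ht, Finset.mem_symmDiff] <;> decide

lemma chi_supp {m : ℕ} (x : Fin m → ZMod 2) :
    chi (Finset.univ.filter (fun i => x i = 1)) = x := by
  funext i
  have : ∀ a : ZMod 2, (if a = 1 then (1 : ZMod 2) else 0) = a := by decide
  simp only [chi, Finset.mem_filter, Finset.mem_univ, true_and, this]

theorem stmt_5 (k : ℕ) (hk : 1 ≤ k)
    (R : Set (Fin (3 * k + 1) → ZMod 2))
    (hR : R = {x | 1 ≤ hwt x ∧ hwt x ≤ 2 * k})
    (z : Fin (3 * k + 1) → ZMod 2) (hz : z ∈ R) :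
    2 ^ k ≤ {p : (Fin (3 * k + 1) → ZMod 2) × (Fin (3 * k + 1) → ZMod 2) |
      p.1 ∈ R ∧ p.2 ∈ R ∧ p.1 + p.2 = z}.ncard := by
  subst hR
  set s : Finset (Fin (3 * k + 1)) := Finset.univ.filter (fun i => z i = 1) with hs
  have hzs : chi s = z := chi_supp z
  obtain ⟨hw1, hw2⟩ := hz
  change 1 ≤ s.card at hw1
  change s.card ≤ 2 * k at hw2
  set w := s.card with hwdef
  -- complement has at least k+1 elements
  have hcompl : k + 1 ≤ sᶜ.card := by
    rw [Finset.card_compl]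
    simp only [Fintype.card_fin]
    omega
  obtain ⟨U, hUc, hU⟩ := Finset.exists_subset_card_eq hcompl
  obtain ⟨j₀, hj₀⟩ : ∃ j, j ∈ U := Finset.card_pos.mp (by omega)
  set T := U.erase j₀ with hTdef
  have hT : T.card = k := by rw [hTdef, Finset.card_erase_of_mem hj₀, hU]; omega
  have hTU : T ⊆ U := Finset.erase_subset _ _
  have hTs : ∀ i ∈ T, i ∉ s := by
    intro i hi
    have := hUc (hTU hi); simpa using this
  have hj₀s : j₀ ∉ s := by have := hUc hj₀; simpa using this
  have hj₀T : j₀ ∉ T := Finset.notMem_erase _ _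
  -- choose A ⊆ s of size a
  set a := min (w - 1) k with hadef
  obtain ⟨A, hAs, hA⟩ := Finset.exists_subset_card_eq (show a ≤ s.card by omega)
  have hAT : ∀ i ∈ T, i ∉ A := fun i hi hiA => hTs i hi (hAs hiA)
  -- the map
    -- x B
  set x : Finset (Fin (3 * k + 1)) → (Fin (3 * k + 1) → ZMod 2) :=
    fun B => if w = 1 ∧ B = ∅ then chi {j₀} else chi (A ∪ B) with hxdef
  set F : Finset (Fin (3 * k + 1)) → ((Fin (3 * k + 1) → ZMod 2) × (Fin (3 * k + 1) → ZMod 2)) :=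
    fun B => (x B, x B + z) with hFdef
  -- support recovery
  have hrec : ∀ B ⊆ T, ∀ i ∈ T, (x B i = 1 ↔ i ∈ B) := by
    intro B hB i hi
    by_cases hcase : w = 1 ∧ B = ∅
    · have hx1 : x B = chi {j₀} := by simp only [hxdef]; exact if_pos hcase
      rw [hx1, chi_eq_one, hcase.2, Finset.mem_singleton]
      constructor
      · rintro rfl; exact absurd hi hj₀T
      · intro h; simp at h
    · have hx1 : x B = chi (A ∪ B) := by simp only [hxdef]; exact if_neg hcase
      rw [hx1, chi_eq_one, Finset.mem_union]
      constructor
      · rintro (h | h)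
        · exact absurd h (hAT i hi)
        · exact h
      · exact Or.inr
  -- disjointness facts
  have hdisjAB : ∀ B ⊆ T, Disjoint A B := by
    intro B hB
    rw [Finset.disjoint_right]
    intro i hiB
    exact hAT i (hB hiB)
  have hdisjBs : ∀ B ⊆ T, Disjoint B s := by
    intro B hB
    rw [Finset.disjoint_left]
    intro i hiB
    exact hTs i (hB hiB)
  -- weight of x B
  have hwx : ∀ B ⊆ T, 1 ≤ hwt (x B) ∧ hwt (x B) ≤ 2 * k := by
    intro B hB
    have hBcard : B.card ≤ k := by
      have := Finset.card_le_card hB; omega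
    by_cases hcase : w = 1 ∧ B = ∅
    · have hx1 : x B = chi {j₀} := by simp only [hxdef]; exact if_pos hcase
      rw [hx1, hwt_chi, Finset.card_singleton]
      omega
    · have hx1 : x B = chi (A ∪ B) := by simp only [hxdef]; exact if_neg hcase
      rw [hx1, hwt_chi, Finset.card_union_of_disjoint (hdisjAB B hB)]
      have hBne : w = 1 → B.card ≥ 1 := by
        intro h1
        rcases Finset.eq_empty_or_nonempty B with rfl | hne
        · exact absurd ⟨h1, rfl⟩ hcase
        · exact Finset.card_pos.mpr hne
      omega
  -- x B + z
  have hxz : ∀ B ⊆ T, 1 ≤ hwt (x B + z) ∧ hwt (x B + z) ≤ 2 * k := by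
    intro B hB
    have hBcard : B.card ≤ k := by
      have := Finset.card_le_card hB; omega
    by_cases hcase : w = 1 ∧ B = ∅
    · have hx1 : x B = chi {j₀} := by simp only [hxdef]; exact if_pos hcase
      have hset : symmDiff ({j₀} : Finset (Fin (3 * k + 1))) s = insert j₀ s := by
        ext i
        simp only [Finset.mem_symmDiff, Finset.mem_singleton, Finset.mem_insert]
        constructor
        · rintro (⟨rfl, -⟩ | ⟨h, h2⟩)
          · exact Or.inl rfl
          · exact Or.inr h
        · rintro (rfl | h)
          · exact Or.inl ⟨rfl, hj₀s⟩
          · exact Or.inr ⟨h, fun he => hj₀s (he ▸ h)⟩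
      rw [hx1, ← hzs, chi_add, hset, hwt_chi, Finset.card_insert_of_notMem hj₀s]
      omega
    · have hx1 : x B = chi (A ∪ B) := by simp only [hxdef]; exact if_neg hcase
      have hset : symmDiff (A ∪ B) s = (s \ A) ∪ B := by
        ext i
        have hiA : i ∈ A → i ∈ s := fun h => hAs h
        have hiB : i ∈ B → i ∉ s := fun h => hTs i (hB h)
        simp only [Finset.mem_symmDiff, Finset.mem_union, Finset.mem_sdiff]
        constructor
        · rintro (⟨hA' | hB', hns⟩ | ⟨hsi, hn⟩)
          · exact absurd (hiA hA') hns
          · exact Or.inr hB'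
          · exact Or.inl ⟨hsi, fun h => hn (Or.inl h)⟩
        · rintro (⟨hsi, hnA⟩ | hB')
          · exact Or.inr ⟨hsi, fun h => h.elim hnA (fun hb => hiB hb hsi)⟩
          · exact Or.inl ⟨Or.inr hB', hiB hB'⟩
      have hx2 : x B + z = chi ((s \ A) ∪ B) := by
        rw [hx1, ← hzs, chi_add, hset]
      have hdisj2 : Disjoint (s \ A) B := by
        rw [Finset.disjoint_left]
        intro i hi
        exact fun hiB => hTs i (hB hiB) (Finset.mem_sdiff.mp hi).1
      rw [hx2, hwt_chi, Finset.card_union_of_disjoint hdisj2,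
        Finset.card_sdiff_of_subset hAs]
      omega
  -- injectivity
  have hinj : Set.InjOn F T.powerset := by
    intro B hB B' hB' hFeq
    rw [Finset.mem_coe, Finset.mem_powerset] at hB hB'
    have hxeq : x B = x B' := congrArg Prod.fst hFeq
    ext i
    by_cases hi : i ∈ T
    · rw [← hrec B hB i hi, ← hrec B' hB' i hi, hxeq]
    · constructor
      · intro h; exact absurd (hB h) hi
      · intro h; exact absurd (hB' h) hi
  -- image is inside the set
  set P : Set ((Fin (3 * k + 1) → ZMod 2) × (Fin (3 * k + 1) → ZMod 2)) :=
    {p | p.1 ∈ {x | 1 ≤ hwt x ∧ hwt x ≤ 2 * k} ∧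
      p.2 ∈ {x | 1 ≤ hwt x ∧ hwt x ≤ 2 * k} ∧ p.1 + p.2 = z} with hPdef
  have hsub : ↑(T.powerset.image F) ⊆ P := by
    intro p hp
    simp only [Finset.coe_image, Set.mem_image, Finset.mem_coe,
      Finset.mem_powerset] at hp
    obtain ⟨B, hB, rfl⟩ := hp
    refine ⟨hwx B hB, hxz B hB, ?_⟩
    show x B + (x B + z) = z
    funext i
    have : ∀ u v : ZMod 2, u + (u + v) = v := by decide
    exact this _ _
  calc 2 ^ k = (T.powerset.image F).card := by
        rw [Finset.card_image_of_injOn (by simpa using hinj),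
          Finset.card_powerset, hT]
    _ = (↑(T.powerset.image F) : Set _).ncard := (Set.ncard_coe_finset _).symm
    _ ≤ P.ncard := Set.ncard_le_ncard hsub (Set.toFinite P)
end

section
/- Consider an edge coloring of the complete graph K_m (m possibly infinite) with colors {red, b_1, …, b_n} such that: (i) no triangle has all three edges with colors from {b_1, …, b_n}; (ii) for every edge uv colored red and every pair of colors (c_1, c_2) from {red, b_1, …, b_n}², there exists a vertex w distinct from u and v with uw colored c_1 and wv colored c_2. If such a coloring exists with at least one red edge, then m ≥ n² + 2n + 3. -/
/-- Colors: `0` is red, `⟨i+1, _⟩` is the blue color `bᵢ`. -/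
theorem stmt_12 (n m : ℕ) (V : Type*) [Fintype V] (hcard : Fintype.card V = m)
    (c : V → V → Fin (n + 1))
    (hsymm : ∀ u v : V, c u v = c v u)
    -- (i) no triangle has all three edges blue
    (hnoblue : ∀ u v w : V, u ≠ v → v ≠ w → u ≠ w →
      ¬(c u v ≠ 0 ∧ c v w ≠ 0 ∧ c u w ≠ 0))
    -- (ii) every red edge has every ordered pair of colors witnessed
    (hneeds : ∀ u v : V, u ≠ v → c u v = 0 →
      ∀ c₁ c₂ : Fin (n + 1), ∃ w : V, w ≠ u ∧ w ≠ v ∧ c u w = c₁ ∧ c w v = c₂)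
    -- there is at least one red edge
    (hred : ∃ u v : V, u ≠ v ∧ c u v = 0) :
    n ^ 2 + 2 * n + 3 ≤ m := by
  classical
  obtain ⟨u, v, huv, hc⟩ := hred
  choose f hfu hfv hf1 hf2 using
    fun p : Fin (n + 1) × Fin (n + 1) => hneeds u v huv hc p.1 p.2
  have hinj : Function.Injective f := by
    intro p q h
    have h1 : p.1 = q.1 := by rw [← hf1 p, ← hf1 q, h]
    have h2 : p.2 = q.2 := by rw [← hf2 p, ← hf2 q, h]
    exact Prod.ext h1 h2
  have hsub : (insert u (insert v (Finset.univ.image f))).card ≤ Fintype.card V :=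
    Finset.card_le_univ _
  have hvnot : v ∉ Finset.univ.image f := by
    simp only [Finset.mem_image, Finset.mem_univ, true_and]
    rintro ⟨p, hp⟩
    exact hfv p hp
  have hunot : u ∉ insert v (Finset.univ.image f) := by
    simp only [Finset.mem_insert, Finset.mem_image, Finset.mem_univ, true_and]
    rintro (h | ⟨p, hp⟩)
    · exact huv h
    · exact hfu p hp
  rw [Finset.card_insert_of_notMem hunot, Finset.card_insert_of_notMem hvnot,
    Finset.card_image_of_injective _ hinj, Finset.card_univ, Fintype.card_prod,
    Fintype.card_fin, hcard] at hsub
  nlinarith [hsub]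
end

section
/- Consider an edge coloring of the complete graph K_m with colors {red, b_1, …, b_n} (n ≥ 1) such that: (i) no triangle is entirely colored with blue colors b_1, …, b_n; (ii) for every red edge uv and every ordered pair of colors (c_1, c_2) ∈ {red, b_1, …, b_n}², some vertex w ≠ u, v has uw colored c_1 and wv colored c_2. If such a coloring exists and contains a red edge, then m ≥ 2n² + 4n + 1. -/
/-- Colors: `0` is red, `⟨i+1, _⟩` is the blue color `bᵢ`. -/
theorem stmt_13 (n m : ℕ) (hn : 1 ≤ n) (V : Type*) [Fintype V] (hcard : Fintype.card V = m)
    (c : V → V → Fin (n + 1))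
    (hsymm : ∀ u v : V, c u v = c v u)
    -- (i) no triangle has all three edges blue
    (hnoblue : ∀ u v w : V, u ≠ v → v ≠ w → u ≠ w →
      ¬(c u v ≠ 0 ∧ c v w ≠ 0 ∧ c u w ≠ 0))
    -- (ii) every red edge has every ordered pair of colors witnessed
    (hneeds : ∀ u v : V, u ≠ v → c u v = 0 →
      ∀ c₁ c₂ : Fin (n + 1), ∃ w : V, w ≠ u ∧ w ≠ v ∧ c u w = c₁ ∧ c w v = c₂)
    -- there is at least one red edge
    (hred : ∃ u v : V, u ≠ v ∧ c u v = 0) :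
    2 * n ^ 2 + 4 * n + 1 ≤ m := by
  classical
  subst hcard
  obtain ⟨u, v, huv, hcuv⟩ := hred
  obtain ⟨b1, hb1⟩ : ∃ b : Fin (n + 1), b ≠ 0 :=
    ⟨⟨1, by omega⟩, Fin.ne_of_val_ne (by simp)⟩
  obtain ⟨x, hxu, hxv, hux, hxv0⟩ := hneeds u v huv hcuv b1 0
  obtain ⟨y, hyu, hyv, huy0, hyv1⟩ := hneeds u v huv hcuv 0 b1
  obtain ⟨w, hwu, hwv, huw, hwv1⟩ := hneeds u v huv hcuv b1 b1
  have hxw : x ≠ w := by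
    intro h; subst h
    exact hb1 (hxv0.symm.trans hwv1).symm
  have hcxw : c x w = 0 := by
    by_contra h
    exact hnoblue u x w (Ne.symm hxu) hxw (Ne.symm hwu)
      ⟨by rw [hux]; exact hb1, h, by rw [huw]; exact hb1⟩
  rcases Nat.lt_or_ge n 2 with hn2 | hn2
  · -- n = 1
    have hn1 : n = 1 := by omega
    subst hn1
    have h7 : (2 * 1 ^ 2 + 4 * 1 + 1 : ℕ) = 7 := by norm_num
    rw [h7]
    by_contra hm
    push_neg at hm
    obtain ⟨z0, hz0u, hz0v, huz0, hz0v0⟩ := hneeds u v huv hcuv 0 0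
    have hxy : x ≠ y := fun h => hb1 (by rw [← hux, h, huy0])
    have hyw : y ≠ w := fun h => hb1 (by rw [← huw, ← h, huy0])
    have hxz : x ≠ z0 := fun h => hb1 (by rw [← hux, h, huz0])
    have hyz : y ≠ z0 := fun h => hb1 (by rw [← hyv1, h, hz0v0])
    have hwz : w ≠ z0 := fun h => hb1 (by rw [← huw, h, huz0])
    have hc2 : ({w, z0} : Finset V).card = 2 := Finset.card_pair hwz
    have hc3 : ({y, w, z0} : Finset V).card = 3 := by
      rw [Finset.card_insert_of_notMem (by simp [hyw, hyz]), hc2]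
    have hc4 : ({x, y, w, z0} : Finset V).card = 4 := by
      rw [Finset.card_insert_of_notMem (by simp [hxy, hxw, hxz]), hc3]
    have hc5 : ({v, x, y, w, z0} : Finset V).card = 5 := by
      rw [Finset.card_insert_of_notMem
        (by simp [Ne.symm hxv, Ne.symm hyv, Ne.symm hwv, Ne.symm hz0v]), hc4]
    have hc6 : ({u, v, x, y, w, z0} : Finset V).card = 6 := by
      rw [Finset.card_insert_of_notMem
        (by simp [huv, Ne.symm hxu, Ne.symm hyu, Ne.symm hwu, Ne.symm hz0u]), hc5]
    have hle : ({u, v, x, y, w, z0} : Finset V).card ≤ Fintype.card V := by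
      rw [← Finset.card_univ]; exact Finset.card_le_univ _
    have huniv : ({u, v, x, y, w, z0} : Finset V) = Finset.univ :=
      Finset.eq_univ_of_card _ (by omega)
    have hmem : ∀ z : V, z = u ∨ z = v ∨ z = x ∨ z = y ∨ z = w ∨ z = z0 := by
      intro z
      have hz := Finset.mem_univ z
      rw [← huniv] at hz
      simpa using hz
    -- chase 1 : c x z0 = 0
    obtain ⟨a, hax, hav, hxa, hav0⟩ := hneeds x v hxv hxv0 0 0
    have hxz0 : c x z0 = 0 := by
      rcases hmem a with h | h | h | h | h | h
      · rw [h] at hxa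
        exact absurd (hux.symm.trans ((hsymm u x).trans hxa)) hb1
      · exact absurd h hav
      · exact absurd h hax
      · rw [h] at hav0
        exact absurd (hyv1.symm.trans hav0) hb1
      · rw [h] at hav0
        exact absurd (hwv1.symm.trans hav0) hb1
      · rw [h] at hxa
        exact hxa
    -- chase 2 : c z0 y = 0
    obtain ⟨d, hdu, hdy, hud, hdy0⟩ := hneeds u y (Ne.symm hyu) huy0 0 0
    have hz0y : c z0 y = 0 := by
      rcases hmem d with h | h | h | h | h | h
      · exact absurd h hdu
      · rw [h] at hdy0
        exact absurd (hyv1.symm.trans ((hsymm y v).trans hdy0)) hb1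
      · rw [h] at hud
        exact absurd (hux.symm.trans hud) hb1
      · exact absurd h hdy
      · rw [h] at hud
        exact absurd (huw.symm.trans hud) hb1
      · rw [h] at hdy0
        exact hdy0
    -- chase 3 : the pair (0, b1) on the red edge u z0 has no witness
    obtain ⟨e, heu, hez, hue, hez0⟩ := hneeds u z0 (Ne.symm hz0u) huz0 0 b1
    rcases hmem e with h | h | h | h | h | h
    · exact heu h
    · rw [h] at hez0
      exact hb1 (hez0.symm.trans ((hsymm v z0).trans hz0v0))
    · rw [h] at hue
      exact hb1 (hux.symm.trans hue)
    · rw [h] at hez0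
      exact hb1 (hez0.symm.trans ((hsymm y z0).trans hz0y))
    · rw [h] at hue
      exact hb1 (huw.symm.trans hue)
    · exact hez h
  · -- n ≥ 2
    have key : ∀ p q : V, p ≠ q → c p q = 0 →
        ∃ F : Fin n × Fin n → V, Function.Injective F ∧
          ∀ a : Fin n × Fin n, F a ≠ p ∧ F a ≠ q ∧
            c p (F a) = a.1.succ ∧ c (F a) q = a.2.succ := by
      intro p q hpq hc
      choose F h1 h2 h3 h4 using fun a : Fin n × Fin n => hneeds p q hpq hc a.1.succ a.2.succ
      refine ⟨F, ?_, fun a => ⟨h1 a, h2 a, h3 a, h4 a⟩⟩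
      intro a b hab
      have e1 : a.1.succ = b.1.succ := by rw [← h3 a, ← h3 b, hab]
      have e2 : a.2.succ = b.2.succ := by rw [← h4 a, ← h4 b, hab]
      exact Prod.ext (Fin.succ_injective _ e1) (Fin.succ_injective _ e2)
    obtain ⟨F₁, hF₁inj, hF₁⟩ := key u v huv hcuv
    obtain ⟨F₂, hF₂inj, hF₂⟩ := key u y (Ne.symm hyu) huy0
    obtain ⟨F₃, hF₃inj, hF₃⟩ := key x v hxv hxv0
    obtain ⟨F₄, hF₄inj, hF₄⟩ := key x w hxw hcxw
    have hF₁u : ∀ a, c u (F₁ a) ≠ 0 := fun a => by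
      rw [(hF₁ a).2.2.1]; exact Fin.succ_ne_zero _
    have hF₁v : ∀ a, c (F₁ a) v ≠ 0 := fun a => by
      rw [(hF₁ a).2.2.2]; exact Fin.succ_ne_zero _
    have hF₂u : ∀ a, c u (F₂ a) ≠ 0 := fun a => by
      rw [(hF₂ a).2.2.1]; exact Fin.succ_ne_zero _
    have hF₂nv : ∀ a, F₂ a ≠ v := fun a h => hF₂u a (by rw [h, hcuv])
    have hF₂v : ∀ a, c (F₂ a) v = 0 := fun a => by
      by_contra h
      exact hnoblue (F₂ a) y v (hF₂ a).2.1 hyv (hF₂nv a)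
        ⟨by rw [(hF₂ a).2.2.2]; exact Fin.succ_ne_zero _, by rw [hyv1]; exact hb1, h⟩
    have hF₃x : ∀ a, c x (F₃ a) ≠ 0 := fun a => by
      rw [(hF₃ a).2.2.1]; exact Fin.succ_ne_zero _
    have hF₃v : ∀ a, c (F₃ a) v ≠ 0 := fun a => by
      rw [(hF₃ a).2.2.2]; exact Fin.succ_ne_zero _
    have hF₃nu : ∀ a, F₃ a ≠ u := fun a h => hF₃v a (by rw [h, hcuv])
    have hF₃u : ∀ a, c u (F₃ a) = 0 := fun a => by
      by_contra h
      exact hnoblue u x (F₃ a) (Ne.symm hxu) (Ne.symm (hF₃ a).1) (Ne.symm (hF₃nu a))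
        ⟨by rw [hux]; exact hb1, hF₃x a, h⟩
    have hF₄x : ∀ a, c x (F₄ a) ≠ 0 := fun a => by
      rw [(hF₄ a).2.2.1]; exact Fin.succ_ne_zero _
    have hF₄w : ∀ a, c (F₄ a) w ≠ 0 := fun a => by
      rw [(hF₄ a).2.2.2]; exact Fin.succ_ne_zero _
    have hF₄nv : ∀ a, F₄ a ≠ v := fun a h => hF₄x a (by rw [h, hxv0])
    have hF₄v : ∀ a, c (F₄ a) v = 0 := fun a => by
      by_contra h
      exact hnoblue (F₄ a) w v (hF₄ a).2.1 hwv (hF₄nv a)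
        ⟨hF₄w a, by rw [hwv1]; exact hb1, h⟩
    have hF₄u : ∀ a, F₄ a = u ∨ c u (F₄ a) = 0 := fun a => by
      by_cases h : F₄ a = u
      · exact Or.inl h
      · right; by_contra h'
        exact hnoblue u x (F₄ a) (Ne.symm hxu) (Ne.symm (hF₄ a).1) (Ne.symm h)
          ⟨by rw [hux]; exact hb1, hF₄x a, h'⟩
    have h12 : ∀ a b, F₁ a ≠ F₂ b := fun a b h => hF₁v a (by rw [h, hF₂v b])
    have h13 : ∀ a b, F₁ a ≠ F₃ b := fun a b h => hF₁u a (by rw [h, hF₃u b])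
    have h14 : ∀ a b, F₁ a ≠ F₄ b := fun a b h =>
      (hF₄u b).elim (fun hu => (hF₁ a).1 (h.trans hu)) (fun h0 => hF₁u a (by rw [h, h0]))
    have h23 : ∀ a b, F₂ a ≠ F₃ b := fun a b h => hF₂u a (by rw [h, hF₃u b])
    have h24 : ∀ a b, F₂ a ≠ F₄ b := fun a b h =>
      (hF₄u b).elim (fun hu => (hF₂ a).1 (h.trans hu)) (fun h0 => hF₂u a (by rw [h, h0]))
    have h34 : ∀ a b, F₃ a ≠ F₄ b := fun a b h => hF₃v a (by rw [h, hF₄v b])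
    have hcard' : Fintype.card (((Fin n × Fin n) ⊕ (Fin n × Fin n)) ⊕
        (((Fin n × Fin n) ⊕ (Fin n × Fin n)) ⊕ PUnit.{1})) ≤ Fintype.card V := by
      apply Fintype.card_le_of_injective
        (Sum.elim (Sum.elim F₁ F₂) (Sum.elim (Sum.elim F₃ F₄) fun _ => v))
      rintro ((a | a) | ((a | a) | a)) ((b | b) | ((b | b) | b)) h <;>
        simp only [Sum.elim_inl, Sum.elim_inr] at h
      all_goals first
        | exact absurd h (h12 a b)
        | exact absurd h (h13 a b)
        | exact absurd h (h14 a b)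
        | exact absurd h (h23 a b)
        | exact absurd h (h24 a b)
        | exact absurd h (h34 a b)
        | exact absurd h.symm (h12 b a)
        | exact absurd h.symm (h13 b a)
        | exact absurd h.symm (h14 b a)
        | exact absurd h.symm (h23 b a)
        | exact absurd h.symm (h24 b a)
        | exact absurd h.symm (h34 b a)
        | exact absurd h ((hF₁ a).2.1)
        | exact absurd h (hF₂nv a)
        | exact absurd h ((hF₃ a).2.1)
        | exact absurd h (hF₄nv a)
        | exact absurd h.symm ((hF₁ b).2.1)
        | exact absurd h.symm (hF₂nv b)
        | exact absurd h.symm ((hF₃ b).2.1)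
        | exact absurd h.symm (hF₄nv b)
        | rw [hF₁inj h]
        | rw [hF₂inj h]
        | rw [hF₃inj h]
        | rw [hF₄inj h]
        | exact congrArg _ (congrArg _ (Subsingleton.elim a b))
    have hC : Fintype.card (((Fin n × Fin n) ⊕ (Fin n × Fin n)) ⊕
        (((Fin n × Fin n) ⊕ (Fin n × Fin n)) ⊕ PUnit.{1})) = n * n + n * n + (n * n + n * n + 1) := by
      simp
    rw [hC] at hcard'
    nlinarith [hcard', hn2, Nat.mul_le_mul_right n hn2]
end

section
/- Under the hypotheses above (edge coloring of K_m with colors red, b_1, …, b_n, no all-blue triangle, and every red edge has all (n+1)² ordered pairs of colors witnessed), if x_0x_1 is a red edge, then the set BB of vertices witnessing a (b_i, b_j) need for x_0x_1 induces a red clique of size n², and every edge from a vertex of BB to a vertex witnessing a (red, b_i) or (b_i, red) need for x_0x_1 is red. -/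
/-- Colors: `0` is red, nonzero colors are the blues `b₁, …, bₙ`.
`BB` is the set of vertices witnessing a (blue, blue) need for the red edge `x₀x₁`;
`RB` is the set of vertices witnessing a (red, blue) or (blue, red) need. -/
theorem stmt_14 (n : ℕ) (V : Type*) [Fintype V]
    (c : V → V → Fin (n + 1))
    (hsymm : ∀ u v : V, c u v = c v u)
    -- no triangle has all three edges blue
    (hnoblue : ∀ u v w : V, u ≠ v → v ≠ w → u ≠ w →
      ¬(c u v ≠ 0 ∧ c v w ≠ 0 ∧ c u w ≠ 0))
    -- every red edge has every ordered pair of colors witnessed,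
    -- with distinct witnesses for distinct needs
    (hneeds : ∀ u v : V, u ≠ v → c u v = 0 →
      ∃ wit : Fin (n + 1) × Fin (n + 1) → V, Function.Injective wit ∧
        ∀ p : Fin (n + 1) × Fin (n + 1),
          wit p ≠ u ∧ wit p ≠ v ∧ c u (wit p) = p.1 ∧ c (wit p) v = p.2)
    (x₀ x₁ : V) (hx : x₀ ≠ x₁) (hredEdge : c x₀ x₁ = 0)
    (BB RB : Set V)
    (hBB : BB = {w | w ≠ x₀ ∧ w ≠ x₁ ∧ c x₀ w ≠ 0 ∧ c w x₁ ≠ 0})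
    (hRB : RB = {w | w ≠ x₀ ∧ w ≠ x₁ ∧
      ((c x₀ w = 0 ∧ c w x₁ ≠ 0) ∨ (c x₀ w ≠ 0 ∧ c w x₁ = 0))}) :
    n ^ 2 ≤ BB.ncard ∧
    (∀ w ∈ BB, ∀ w' ∈ BB, w ≠ w' → c w w' = 0) ∧
    (∀ w ∈ BB, ∀ w' ∈ RB, w ≠ w' → c w w' = 0) := by
  refine ⟨?_, ?_, ?_⟩
  · obtain ⟨wit, hinj, hwit⟩ := hneeds x₀ x₁ hx hredEdge
    classical
    set S : Finset (Fin (n + 1) × Fin (n + 1)) :=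
      Finset.univ.filter (fun p => p.1 ≠ 0 ∧ p.2 ≠ 0) with hS
    have hScard : S.card = n ^ 2 := by
      have : S = (Finset.univ.filter (fun x : Fin (n+1) => x ≠ 0)) ×ˢ
          (Finset.univ.filter (fun x : Fin (n+1) => x ≠ 0)) := by
        ext p; simp [hS, Finset.mem_product]
      rw [this, Finset.card_product]
      have : (Finset.univ.filter (fun x : Fin (n+1) => x ≠ 0)).card = n := by
        rw [Finset.filter_ne']
        simp
      rw [this]; ring
    have hsub : ↑(S.image wit) ⊆ BB := by
      intro v hv
      simp only [Finset.coe_image, Set.mem_image, Finset.mem_coe, hS,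
        Finset.mem_filter] at hv
      obtain ⟨p, ⟨_, hp1, hp2⟩, rfl⟩ := hv
      obtain ⟨h1, h2, h3, h4⟩ := hwit p
      rw [hBB]
      exact ⟨h1, h2, fun h => hp1 (by rw [h3] at h; exact h.symm ▸ rfl),
        fun h => hp2 (by rw [h4] at h; exact h.symm ▸ rfl)⟩
    calc n ^ 2 = (S.image wit).card := by
          rw [Finset.card_image_of_injective _ hinj, hScard]
      _ = (↑(S.image wit) : Set V).ncard := (Set.ncard_coe_finset _).symm
      _ ≤ BB.ncard := Set.ncard_le_ncard hsub (Set.toFinite _)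
  · intro w hw w' hw' hne
    rw [hBB] at hw hw'
    obtain ⟨hw0, hw1, hwb0, hwb1⟩ := hw
    obtain ⟨hw'0, hw'1, hw'b0, hw'b1⟩ := hw'
    by_contra hc
    exact hnoblue x₀ w w' (Ne.symm hw0) hne (Ne.symm hw'0) ⟨hwb0, hc, hw'b0⟩
  · intro w hw w' hw' hne
    rw [hBB] at hw; rw [hRB] at hw'
    obtain ⟨hw0, hw1, hwb0, hwb1⟩ := hw
    obtain ⟨hw'0, hw'1, hcase⟩ := hw'
    by_contra hc
    rcases hcase with ⟨h1, h2⟩ | ⟨h1, h2⟩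
    · exact hnoblue w w' x₁ hne hw'1 hw1 ⟨hc, h2, hwb1⟩
    · exact hnoblue x₀ w w' (Ne.symm hw0) hne (Ne.symm hw'0) ⟨hwb0, hc, h1⟩
end

section
/- Consider an edge 2-coloring setup: edges of K_m colored with red, light blue, dark blue, such that no triangle has all three edges blue (light or dark), and every red edge uv has, for each of the 9 ordered pairs of colors, a witness vertex w with uw and wv colored accordingly. If there is a red edge, then m ≥ 12. Moreover, since R(4,3) = 9 forces a red K_4, in fact m ≥ 12 follows from the red-red need being witnessed at least twice. -/
/-- Colors: `0` is red, `1` is light blue, `2` is dark blue. -/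
theorem stmt_15 (m : ℕ) (V : Type*) [Fintype V] (hcard : Fintype.card V = m)
    (c : V → V → Fin 3)
    (hsymm : ∀ u v : V, c u v = c v u)
    -- no triangle has all three edges blue
    (hnoblue : ∀ u v w : V, u ≠ v → v ≠ w → u ≠ w →
      ¬(c u v ≠ 0 ∧ c v w ≠ 0 ∧ c u w ≠ 0))
    -- every red edge has all 9 ordered pairs of colors witnessed,
    -- with distinct witnesses for distinct needs
    (hneeds : ∀ u v : V, u ≠ v → c u v = 0 →
      ∃ wit : Fin 3 × Fin 3 → V, Function.Injective wit ∧
        ∀ p : Fin 3 × Fin 3,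
          wit p ≠ u ∧ wit p ≠ v ∧ c u (wit p) = p.1 ∧ c (wit p) v = p.2)
    -- there is a red edge
    (hred : ∃ u v : V, u ≠ v ∧ c u v = 0) :
    12 ≤ m := by
  classical
  subst hcard
  obtain ⟨u, v, huv, hc⟩ := hred
  obtain ⟨wit, hinj, hw⟩ := hneeds u v huv hc
  have hne : ∀ p q : Fin 3 × Fin 3, p ≠ q → wit p ≠ wit q :=
    fun p q h e => h (hinj e)
  -- any two witnesses whose first color is blue are joined by a red edge
  have red2 : ∀ p q : Fin 3 × Fin 3, p ≠ q → p.1 ≠ 0 → q.1 ≠ 0 →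
      c (wit p) (wit q) = 0 := by
    intro p q hpq hp hq
    have h1 := hw p
    have h2 := hw q
    have h := hnoblue u (wit p) (wit q) (Ne.symm h1.1) (hne p q hpq) (Ne.symm h2.1)
    by_contra hcon
    exact h ⟨by rw [h1.2.2.1]; exact hp, hcon, by rw [h2.2.2.1]; exact hq⟩
  have r1112 : c (wit (1,1)) (wit (1,2)) = 0 := red2 (1,1) (1,2) (by decide) (by decide) (by decide)
  have r1121 : c (wit (1,1)) (wit (2,1)) = 0 := red2 (1,1) (2,1) (by decide) (by decide) (by decide)
  have r2112 : c (wit (2,1)) (wit (1,2)) = 0 := red2 (2,1) (1,2) (by decide) (by decide) (by decide)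
  have r1122 : c (wit (1,1)) (wit (2,2)) = 0 := red2 (1,1) (2,2) (by decide) (by decide) (by decide)
  have r2212 : c (wit (2,2)) (wit (1,2)) = 0 := red2 (2,2) (1,2) (by decide) (by decide) (by decide)
  obtain ⟨wit', hinj', hw'⟩ :=
    hneeds (wit (1,1)) (wit (1,2)) (hne _ _ (by decide)) r1112
  -- the eleven distinct vertices
  set F : Finset V := insert u (insert v (Finset.image wit Finset.univ)) with hF
  have hmemw : ∀ p : Fin 3 × Fin 3, wit p ∈ F := by
    intro p
    simp [hF]
  have hcardF : F.card = 11 := by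
    have h1 : (Finset.image wit Finset.univ).card = 9 := by
      rw [Finset.card_image_of_injective _ hinj]
      simp
    have hv : v ∉ Finset.image wit Finset.univ := by
      simp only [Finset.mem_image, Finset.mem_univ, true_and, not_exists]
      exact fun p e => (hw p).2.1 e
    have hu : u ∉ insert v (Finset.image wit Finset.univ) := by
      simp only [Finset.mem_insert, Finset.mem_image, Finset.mem_univ, true_and, not_or,
        not_exists]
      exact ⟨huv, fun p e => (hw p).1 e⟩
    rw [hF, Finset.card_insert_of_notMem hu, Finset.card_insert_of_notMem hv, h1]
  -- some witness of the red edge (wit (1,1), wit (1,2)) lies outside F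
  have hex : ∃ p : Fin 3 × Fin 3, wit' p ∉ F := by
    by_contra h
    push_neg at h
    have hsub : Finset.image wit' Finset.univ ⊆ (F.erase (wit (1,1))).erase (wit (1,2)) := by
      intro x hx
      simp only [Finset.mem_image, Finset.mem_univ, true_and] at hx
      obtain ⟨p, rfl⟩ := hx
      exact Finset.mem_erase.mpr ⟨(hw' p).2.1, Finset.mem_erase.mpr ⟨(hw' p).1, h p⟩⟩
    have hc1 : ((F.erase (wit (1,1))).erase (wit (1,2))).card = 9 := by
      rw [Finset.card_erase_of_mem, Finset.card_erase_of_mem (hmemw (1,1)), hcardF]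
      exact Finset.mem_erase.mpr ⟨hne _ _ (by decide), hmemw (1,2)⟩
    have hc2 : (Finset.image wit' Finset.univ).card = 9 := by
      rw [Finset.card_image_of_injective _ hinj']
      simp
    have heq : Finset.image wit' Finset.univ = (F.erase (wit (1,1))).erase (wit (1,2)) :=
      Finset.eq_of_subset_of_card_le hsub (by rw [hc1, hc2])
    have h21 : wit (2,1) ∈ Finset.image wit' Finset.univ := by
      rw [heq]
      exact Finset.mem_erase.mpr ⟨hne _ _ (by decide),
        Finset.mem_erase.mpr ⟨hne _ _ (by decide), hmemw (2,1)⟩⟩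
    have h22 : wit (2,2) ∈ Finset.image wit' Finset.univ := by
      rw [heq]
      exact Finset.mem_erase.mpr ⟨hne _ _ (by decide),
        Finset.mem_erase.mpr ⟨hne _ _ (by decide), hmemw (2,2)⟩⟩
    obtain ⟨p, -, hp⟩ := Finset.mem_image.mp h21
    obtain ⟨q, -, hq⟩ := Finset.mem_image.mp h22
    have hp0 : p = (0, 0) := by
      have h1 : c (wit (1,1)) (wit' p) = p.1 := (hw' p).2.2.1
      have h2 : c (wit' p) (wit (1,2)) = p.2 := (hw' p).2.2.2
      rw [hp] at h1 h2
      rw [r1121] at h1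
      rw [r2112] at h2
      exact Prod.ext h1.symm h2.symm
    have hq0 : q = (0, 0) := by
      have h1 : c (wit (1,1)) (wit' q) = q.1 := (hw' q).2.2.1
      have h2 : c (wit' q) (wit (1,2)) = q.2 := (hw' q).2.2.2
      rw [hq] at h1 h2
      rw [r1122] at h1
      rw [r2212] at h2
      exact Prod.ext h1.symm h2.symm
    have : wit (2,1) = wit (2,2) := by rw [← hp, ← hq, hp0, hq0]
    exact hne (2,1) (2,2) (by decide) this
  obtain ⟨p, hpF⟩ := hex
  have h12 : (insert (wit' p) F).card = 12 := by
    rw [Finset.card_insert_of_notMem hpF, hcardF]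
  calc 12 = (insert (wit' p) F).card := h12.symm
    _ ≤ Fintype.card V := Finset.card_le_univ _
end

section
/- In any edge coloring of K_m with colors red, light blue, dark blue, such that no triangle is all-blue (i.e., every triangle contains a red edge) and every red edge has all 9 ordered pairs of colors witnessed by distinct vertices, every red edge x_0x_1 is vertex-disjoint from some red K_4; specifically, the four witnesses of the blue-blue needs of x_0x_1 induce a red K_4. -/
/-- Colors: `0` is red, `1` is light blue, `2` is dark blue.  For any red edge
`x₀x₁`, the witnesses of its blue-blue needs induce a red `K₄` vertex-disjoint
from `{x₀, x₁}`. -/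
theorem stmt_16 (V : Type*) [Fintype V]
    (c : V → V → Fin 3)
    (hsymm : ∀ u v : V, c u v = c v u)
    (hnoblue : ∀ u v w : V, u ≠ v → v ≠ w → u ≠ w →
      ¬(c u v ≠ 0 ∧ c v w ≠ 0 ∧ c u w ≠ 0))
    (hneeds : ∀ u v : V, u ≠ v → c u v = 0 →
      ∃ wit : Fin 3 × Fin 3 → V, Function.Injective wit ∧
        ∀ p : Fin 3 × Fin 3,
          wit p ≠ u ∧ wit p ≠ v ∧ c u (wit p) = p.1 ∧ c (wit p) v = p.2)
    (x₀ x₁ : V) (hx : x₀ ≠ x₁) (hredEdge : c x₀ x₁ = 0)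
    (BB : Set V)
    (hBB : BB = {w | w ≠ x₀ ∧ w ≠ x₁ ∧ c x₀ w ≠ 0 ∧ c w x₁ ≠ 0}) :
    4 ≤ BB.ncard ∧ (∀ w ∈ BB, ∀ w' ∈ BB, w ≠ w' → c w w' = 0) := by
  classical
  obtain ⟨wit, hinj, hw⟩ := hneeds x₀ x₁ hx hredEdge
  constructor
  · have hmem : ∀ p : Fin 3 × Fin 3, p.1 ≠ 0 → p.2 ≠ 0 → wit p ∈ BB := by
      intro p h1 h2
      obtain ⟨hu, hv, hc1, hc2⟩ := hw p
      rw [hBB]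
      exact ⟨hu, hv, by rw [hc1]; exact h1, by rw [hc2]; exact h2⟩
    set s : Finset V := {wit (1,1), wit (1,2), wit (2,1), wit (2,2)} with hs
    have hsub : (↑s : Set V) ⊆ BB := by
      intro x hxs
      simp only [hs, Finset.coe_insert, Set.mem_insert_iff, Finset.coe_singleton,
        Set.mem_singleton_iff] at hxs
      rcases hxs with h | h | h | h <;> subst h <;>
        exact hmem _ (by decide) (by decide)
    have hcard : s.card = 4 := by
      have h12 : wit (1,1) ≠ wit (1,2) := fun h => absurd (hinj h) (by decide)
      have h13 : wit (1,1) ≠ wit (2,1) := fun h => absurd (hinj h) (by decide)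
      have h14 : wit (1,1) ≠ wit (2,2) := fun h => absurd (hinj h) (by decide)
      have h23 : wit (1,2) ≠ wit (2,1) := fun h => absurd (hinj h) (by decide)
      have h24 : wit (1,2) ≠ wit (2,2) := fun h => absurd (hinj h) (by decide)
      have h34 : wit (2,1) ≠ wit (2,2) := fun h => absurd (hinj h) (by decide)
      rw [hs, Finset.card_insert_of_notMem (by simp only [Finset.mem_insert, Finset.mem_singleton]; exact fun h => h.elim h12 fun h => h.elim h13 h14),
        Finset.card_insert_of_notMem (by simp only [Finset.mem_insert, Finset.mem_singleton]; exact fun h => h.elim h23 h24),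
        Finset.card_insert_of_notMem (by simp only [Finset.mem_singleton]; exact h34), Finset.card_singleton]
    calc (4 : ℕ) = (↑s : Set V).ncard := by rw [Set.ncard_coe_finset, hcard]
      _ ≤ BB.ncard := Set.ncard_le_ncard hsub (Set.toFinite _)
  · intro w hwB w' hw'B hne
    rw [hBB] at hwB hw'B
    obtain ⟨hw0, hw1, hc0, hc1⟩ := hwB
    obtain ⟨hw0', hw1', hc0', hc1'⟩ := hw'B
    by_contra hred
    exact hnoblue w x₀ w' (fun h => hw0 h) (fun h => hw0' h.symm) hne
      ⟨by rw [hsymm]; exact hc0, hc0', hred⟩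
end

section
/- Let G = (ℤ/2ℤ)^10 viewed as bitstrings of length 10, R = {x ∈ G : 1 ≤ |x| ≤ 6} and B = {x ∈ G : |x| ≥ 7}, where |x| is Hamming weight. Then R + R = G, R + B = G \ {0}, and B + B = R ∪ {0}; i.e., this partition gives a group representation of the relation algebra 6_7 over 1024 points. -/
lemma hwt_le {m : ℕ} (x : Fin m → ZMod 2) : hwt x ≤ m := by
  simpa [hwt] using (Finset.card_filter_le Finset.univ (fun i => x i = 1))

lemma hwt_eq_zero_iff {m : ℕ} (x : Fin m → ZMod 2) : hwt x = 0 ↔ x = 0 := by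
  constructor
  · intro h
    funext i
    rw [hwt, Finset.card_eq_zero, Finset.filter_eq_empty_iff] at h
    rcases zmod2_cases (x i) with h'|h'
    · simpa using h'
    · exact absurd h' (h (Finset.mem_univ i))
  · intro h; subst h; simp [hwt]

lemma decomp {m : ℕ} (z : Fin m → ZMod 2) (p q : ℕ) (hp : p ≤ hwt z)
    (hq : q ≤ m - hwt z) :
    ∃ x : Fin m → ZMod 2, hwt x = p + q ∧ hwt (x + z) = (hwt z - p) + q := by
  classical
  set S := Finset.univ.filter (fun i => z i = 1) with hS
  have hScard : S.card = hwt z := rfl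
  obtain ⟨P, hPS, hPcard⟩ := Finset.exists_subset_card_eq (s := S) (n := p) (by omega)
  have hSc : Sᶜ.card = m - hwt z := by
    rw [Finset.card_compl, hScard]; simp
  obtain ⟨Q, hQS, hQcard⟩ := Finset.exists_subset_card_eq (s := Sᶜ) (n := q) (by omega)
  refine ⟨fun i => if i ∈ P ∪ Q then 1 else 0, ?_, ?_⟩
  · have : Finset.univ.filter (fun i => (if i ∈ P ∪ Q then (1:ZMod 2) else 0) = 1) = P ∪ Q := by
      ext i
      simp only [Finset.mem_filter, Finset.mem_univ, true_and]
      constructor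
      · intro h1
        by_contra h2
        rw [if_neg h2] at h1
        exact (by decide : (0:ZMod 2) ≠ 1) h1
      · intro h1; rw [if_pos h1]
    rw [hwt, this, Finset.card_union_of_disjoint, hPcard, hQcard]
    exact Finset.disjoint_left.mpr (fun i hiP hiQ =>
      (Finset.mem_compl.mp (hQS hiQ)) (hPS hiP))
  · have key : Finset.univ.filter
        (fun i => ((fun i => if i ∈ P ∪ Q then (1:ZMod 2) else 0) + z) i = 1)
        = (S \ P) ∪ Q := by
      ext i
      simp only [Finset.mem_filter, Finset.mem_univ, true_and, Pi.add_apply]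
      by_cases hiP : i ∈ P
      · have hz : z i = 1 := (Finset.mem_filter.mp (hPS hiP)).2
        have hdQ : i ∉ Q := fun hiQ => (Finset.mem_compl.mp (hQS hiQ)) (hPS hiP)
        rw [if_pos (Finset.mem_union_left _ hiP), hz]
        constructor
        · intro h; exact absurd h (by decide)
        · intro h
          rcases Finset.mem_union.mp h with h'|h'
          · exact absurd hiP (Finset.mem_sdiff.mp h').2
          · exact absurd h' hdQ
      · by_cases hiQ : i ∈ Q
        · have hz : z i ≠ 1 := by
            have := Finset.mem_compl.mp (hQS hiQ)
            simpa [hS] using this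
          have hz0 : z i = 0 := (zmod2_cases (z i)).resolve_right hz
          rw [if_pos (Finset.mem_union_right _ hiQ), hz0]
          simp [Finset.mem_union, hiQ]
        · have h1 : i ∉ P ∪ Q := by simp [Finset.mem_union, hiP, hiQ]
          rw [if_neg h1, zero_add, Finset.mem_union, Finset.mem_sdiff]
          simp only [hiQ, or_false, hiP, not_false_iff, and_true]
          rw [hS, Finset.mem_filter]
          simp
    rw [hwt, key, Finset.card_union_of_disjoint, Finset.card_sdiff_of_subset hPS, hPcard, hQcard, hScard]
    refine Finset.disjoint_left.mpr (fun i hi hiQ => ?_)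
    exact (Finset.mem_compl.mp (hQS hiQ)) (Finset.mem_sdiff.mp hi).1

lemma hwt_add_le {m : ℕ} (x y : Fin m → ZMod 2) :
    hwt (x + y) ≤ (m - hwt x) + (m - hwt y) := by
  classical
  have hx : (Finset.univ.filter (fun i => ¬ x i = 1)).card = m - hwt x := by
    have := Finset.card_filter_add_card_filter_not (s := Finset.univ)
      (p := fun i => x i = 1)
    simp only [Finset.card_univ, Fintype.card_fin] at this
    have h0 : (Finset.univ.filter (fun i => x i = 1)).card = hwt x := rfl
    omega
  have hy : (Finset.univ.filter (fun i => ¬ y i = 1)).card = m - hwt y := by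
    have := Finset.card_filter_add_card_filter_not (s := Finset.univ)
      (p := fun i => y i = 1)
    simp only [Finset.card_univ, Fintype.card_fin] at this
    have h0 : (Finset.univ.filter (fun i => y i = 1)).card = hwt y := rfl
    omega
  have hsub : Finset.univ.filter (fun i => (x + y) i = 1) ⊆
      (Finset.univ.filter (fun i => ¬ x i = 1)) ∪ (Finset.univ.filter (fun i => ¬ y i = 1)) := by
    intro i hi
    have h : x i + y i = 1 := (Finset.mem_filter.mp hi).2
    simp only [Finset.mem_union, Finset.mem_filter, Finset.mem_univ, true_and]
    rcases zmod2_cases (x i) with h1|h1 <;> rcases zmod2_cases (y i) with h2|h2 <;>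
      simp_all
  calc hwt (x + y) ≤ _ := Finset.card_le_card hsub
    _ ≤ _ := Finset.card_union_le _ _
    _ = _ := by rw [hx, hy]

lemma add_self_zero {m : ℕ} (x : Fin m → ZMod 2) : x + x = 0 := by
  funext i
  simp only [Pi.add_apply, Pi.zero_apply]
  rcases zmod2_cases (x i) with h|h <;> rw [h] <;> decide

theorem stmt_18 (R B : Set (Fin 10 → ZMod 2))
    (hR : R = {x | 1 ≤ hwt x ∧ hwt x ≤ 6})
    (hB : B = {x | 7 ≤ hwt x}) :
    {z | ∃ x ∈ R, ∃ y ∈ R, x + y = z} = Set.univ ∧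
    {z | ∃ x ∈ R, ∃ y ∈ B, x + y = z} = Set.univ \ {0} ∧
    {z | ∃ x ∈ B, ∃ y ∈ B, x + y = z} = R ∪ {0} := by
  subst hR hB
  have key : ∀ (z : Fin 10 → ZMod 2) (p q : ℕ), p ≤ hwt z → q ≤ 10 - hwt z →
      ∃ x y : Fin 10 → ZMod 2, hwt x = p + q ∧ hwt y = (hwt z - p) + q ∧ x + y = z := by
    intro z p q hp hq
    obtain ⟨x, hx1, hx2⟩ := decomp z p q hp hq
    exact ⟨x, x + z, hx1, hx2, by rw [← add_assoc, add_self_zero, zero_add]⟩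
  refine ⟨?_, ?_, ?_⟩
  · ext z
    simp only [Set.mem_setOf_eq, Set.mem_univ, iff_true]
    have h10 := hwt_le z
    -- choose p q by cases on hwt z
    have : ∃ p q, p ≤ hwt z ∧ q ≤ 10 - hwt z ∧ 1 ≤ p + q ∧ p + q ≤ 6 ∧
        1 ≤ (hwt z - p) + q ∧ (hwt z - p) + q ≤ 6 := by
      rcases Nat.lt_or_ge (hwt z) 2 with h|h
      · exact ⟨0, 1, by omega, by omega, by omega, by omega, by omega, by omega⟩
      · rcases Nat.lt_or_ge (hwt z) 7 with h2|h2
        · exact ⟨1, 0, by omega, by omega, by omega, by omega, by omega, by omega⟩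
        · exact ⟨hwt z - 5, 0, by omega, by omega, by omega, by omega, by omega, by omega⟩
    obtain ⟨p, q, h1, h2, h3, h4, h5, h6⟩ := this
    obtain ⟨x, y, hx, hy, hxy⟩ := key z p q h1 h2
    exact ⟨x, ⟨by omega, by omega⟩, y, ⟨by omega, by omega⟩, hxy⟩
  · ext z
    simp only [Set.mem_setOf_eq, Set.mem_diff, Set.mem_univ, true_and, Set.mem_singleton_iff]
    constructor
    · rintro ⟨x, hx, y, hy, rfl⟩
      intro h0
      have : x = y := by
        have := congrArg (· + y) h0
        simpa [add_assoc, add_self_zero y] using this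
      rw [this] at hx
      exact absurd hy (by simpa using Nat.not_le.mpr (Nat.lt_succ_of_le hx.2))
    · intro hz
      have h1 : 1 ≤ hwt z := by
        by_contra h
        exact hz ((hwt_eq_zero_iff z).mp (by omega))
      have h10 := hwt_le z
      have : ∃ p q, p ≤ hwt z ∧ q ≤ 10 - hwt z ∧ 1 ≤ p + q ∧ p + q ≤ 6 ∧
          7 ≤ (hwt z - p) + q := by
        rcases Nat.lt_or_ge (hwt z) 7 with h|h
        · exact ⟨0, 7 - hwt z, by omega, by omega, by omega, by omega, by omega⟩
        · rcases Nat.lt_or_ge (hwt z) 10 with h2|h2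
          · exact ⟨0, 1, by omega, by omega, by omega, by omega, by omega⟩
          · exact ⟨1, 0, by omega, by omega, by omega, by omega, by omega⟩
      obtain ⟨p, q, h2, h3, h4, h5, h6⟩ := this
      obtain ⟨x, y, hx, hy, hxy⟩ := key z p q h2 h3
      exact ⟨x, ⟨by omega, by omega⟩, y, by omega, hxy⟩
  · ext z
    simp only [Set.mem_setOf_eq, Set.mem_union, Set.mem_singleton_iff]
    constructor
    · rintro ⟨x, hx, y, hy, rfl⟩
      have hle := hwt_add_le x y
      rcases Nat.eq_zero_or_pos (hwt (x + y)) with h|h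
      · exact Or.inr ((hwt_eq_zero_iff _).mp h)
      · exact Or.inl ⟨h, by omega⟩
    · intro hz
      have hk : hwt z ≤ 6 := by
        rcases hz with ⟨h1, h2⟩ | rfl
        · exact h2
        · simp [(hwt_eq_zero_iff (0 : Fin 10 → ZMod 2)).mpr rfl]
      have h10 := hwt_le z
      have : ∃ p q, p ≤ hwt z ∧ q ≤ 10 - hwt z ∧ 7 ≤ p + q ∧ 7 ≤ (hwt z - p) + q := by
        exact ⟨hwt z - 3, 10 - hwt z, by omega, by omega, by omega, by omega⟩
      obtain ⟨p, q, h1, h2, h3, h4⟩ := this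
      obtain ⟨x, y, hx, hy, hxy⟩ := key z p q h1 h2
      exact ⟨x, by omega, y, by omega, hxy⟩
end
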